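/- Let c_1, c_2, c_3 be three positive constants and let u_1,…,u_k, v_1,…,v_k ∈ ℝ^d be such that for all i = 1,…,k, c_1 ≤ ‖u_i‖_∞ ≤ c_2 and c_1 ≤ ‖v_i‖_∞ ≤ c_2, and, if k ≥ 2, ∠(u_i, span{u_j: j ≠ i}) ≥ c_3 and ∠(v_i, span{v_j: j ≠ i}) ≥ c_3 for all i. Then there is a constant c depending only on k, d, c_1, c_2, c_3 such that ∠(span{u_1,…,u_k}, span{v_1,…,v_k}) ≤ c · max_{i=1,…,k} ‖v_i − u_i‖_∞. -/

import Mathlib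

open MeasureTheory Filter Set
open scoped RealInnerProductSpace

noncomputable section

abbrev Euc (n : ℕ) := EuclideanSpace ℝ (Fin n)

/-- The sup-norm `‖x‖_∞` of a vector. -/
def supNorm {n : ℕ} (x : Euc n) : ℝ := ⨆ i, |x i|

/-- The unit cube `[0,1]^n`. -/
def unitCube (n : ℕ) : Set (Euc n) := {x | ∀ i, x i ∈ Set.Icc (0:ℝ) 1}

/-- The uniform probability measure on `[0,1]^n`. -/
def cubeUniform (n : ℕ) : Measure (Euc n) := volume.restrict (unitCube n)

/-- The angle between two linear subspaces of `ℝ^d`: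
`max_{0 ≠ u ∈ H} min_{0 ≠ v ∈ K} arccos (⟨u,v⟩ / (‖u‖‖v‖))`. -/
def subAngle {d : ℕ} (H K : Submodule ℝ (Euc d)) : ℝ :=
  ⨆ u : {u : Euc d // u ∈ H ∧ u ≠ 0},
    ⨅ v : {v : Euc d // v ∈ K ∧ v ≠ 0},
      Real.arccos (⟪u.1, v.1⟫ / (‖u.1‖ * ‖v.1‖))

/-- The Grassmannian `G(k,d)` of `k`-dimensional linear subspaces of `ℝ^d`. -/
def Grass (k d : ℕ) := {H : Submodule ℝ (Euc d) // Module.finrank ℝ H = k}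

/-- The ball `B(H,ε)` in the Grassmannian, for the angle metric. -/
def GrassBall {k d : ℕ} (H : Grass k d) (ε : ℝ) : Set (Grass k d) :=
  {K | subAngle H.1 K.1 ≤ ε}

instance {k d : ℕ} : MeasurableSpace (Grass k d) :=
  MeasurableSpace.generateFrom {S | ∃ H ε, S = GrassBall H ε}

/-- Action of an orthogonal transformation on the Grassmannian. -/
def rotGrass {k d : ℕ} (Q : Euc d ≃ₗᵢ[ℝ] Euc d) (H : Grass k d) : Grass k d :=
  ⟨H.1.map (Q.toLinearEquiv : Euc d →ₗ[ℝ] Euc d),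
    (LinearEquiv.finrank_map_eq _ _).trans H.2⟩

/-- A measure on the Grassmannian invariant under the orthogonal group `O(d)`. -/
def IsOrthInvariant {k d : ℕ} (lam : Measure (Grass k d)) : Prop :=
  ∀ Q : Euc d ≃ₗᵢ[ℝ] Euc d, ∀ S : Set (Grass k d), MeasurableSet S →
    lam (rotGrass Q ⁻¹' S) = lam S

/-- Partial derivative `∂_s f`. -/
def pd {k n : ℕ} (s : Fin k) (f : Euc k → Euc n) : Euc k → Euc n :=
  fun x => fderiv ℝ f x (EuclideanSpace.single s 1)

/-- Iterated partial derivatives along a list of directions. -/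
def pdIter {k n : ℕ} (l : List (Fin k)) (f : Euc k → Euc n) : Euc k → Euc n :=
  l.foldr pd f

/-- The list of directions associated to a multi-index. -/
def listOf {k : ℕ} (s : Fin k → ℕ) : List (Fin k) :=
  (List.finRange k).foldr (fun i l => List.replicate (s i) i ++ l) []

/-- Partial derivative `f^{(𝐬)}` of multi-order `𝐬`. -/
def mderiv {k n : ℕ} (s : Fin k → ℕ) (f : Euc k → Euc n) : Euc k → Euc n :=
  pdIter (listOf s) f

/-- `r = max {m ∈ ℕ : m < α}`. -/
def rr (α : ℝ) : ℕ := sSup {m : ℕ | (m : ℝ) < α}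

/-- The Hölder class `H^{k,n}(α,β)`. -/
def Holder (k n : ℕ) (α β : ℝ) : Set (Euc k → Euc n) :=
  {f | Set.MapsTo f (unitCube k) (unitCube n) ∧
    (∀ l : List (Fin k), l.length < rr α → Differentiable ℝ (pdIter l f)) ∧
    (∀ s : Fin k → ℕ, (∑ i, s i) ≤ rr α → ∀ x ∈ unitCube k, supNorm (mderiv s f x) ≤ β) ∧
    (∀ s : Fin k → ℕ, (∑ i, s i) = rr α → ∀ x ∈ unitCube k, ∀ y ∈ unitCube k,
      supNorm (mderiv s f x - mderiv s f y) ≤ β * supNorm (x - y) ^ (α - rr α))}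

/-- The tangent space `f⃗(x) = span {∂_s f(x) : s}`. -/
def tangent {k d : ℕ} (f : Euc k → Euc d) (x : Euc k) : Submodule ℝ (Euc d) :=
  Submodule.span ℝ (Set.range fun s => pd s f x)

/-- The class `𝓕` of the paper. -/
def ClassF (k d : ℕ) (β : ℝ) : Set (Euc k → Euc d) :=
  {f | Set.MapsTo f (unitCube k) (unitCube d) ∧
    Set.InjOn f (unitCube k) ∧
    Differentiable ℝ f ∧ (∀ s, Differentiable ℝ (pd s f)) ∧
    (∀ s, ∀ x ∈ unitCube k, 1/β ≤ supNorm (pd s f x) ∧ supNorm (pd s f x) ≤ β) ∧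
    (∀ s t, ∀ x ∈ unitCube k, supNorm (pd t (pd s f) x) ≤ β) ∧
    (1 < k → ∀ s, ∀ x ∈ unitCube k,
      1/(2*β*((d:ℝ) - k)) ≤ subAngle (Submodule.span ℝ {pd s f x})
        (Submodule.span ℝ ((fun t => pd t f x) '' {t | t ≠ s})))}

/-- `f` interpolates `(z, w) ∈ [0,1]^d × G(k,d)`. -/
def InterpF {k d : ℕ} (f : Euc k → Euc d) (p : Euc d × Grass k d) : Prop :=
  ∃ x ∈ unitCube k, f x = p.1 ∧ tangent f x = p.2.1

/-- `N_n^→(𝓕) = max_{f ∈ 𝓕} #{i : f interpolates (Z_i,W_i)}`. -/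
def NFmax (k d : ℕ) (β : ℝ) {n : ℕ} (ω : Fin n → Euc d × Grass k d) : ℕ :=
  ⨆ f : ClassF k d β, Nat.card {i : Fin n // InterpF f.1 (ω i)}

/-- The set `𝐒` of multi-indices of total order at most `r₀`. -/
def SIdx (k r0 : ℕ) := {s : Fin k → Fin (r0+1) // (∑ i, (s i : ℕ)) ≤ r0}

instance (k r0 : ℕ) : Fintype (SIdx k r0) := by unfold SIdx; infer_instance

/-- The multi-index in `ℕ^k` associated to an element of `𝐒`. -/
def toMulti {k r0 : ℕ} (s : SIdx k r0) : Fin k → ℕ := fun i => (s.1 i : ℕ)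

/-- The uniform probability measure on `[-β,β]^n`. -/
def boxUniform (n : ℕ) (β : ℝ) : Measure (Euc n) :=
  (ENNReal.ofReal ((2*β)^n))⁻¹ • volume.restrict {y : Euc n | ∀ j, y j ∈ Set.Icc (-β) β}

open Classical in
/-- The distribution of one observation `(X, Y^𝐒)` under the null hypothesis:
uniform on `[0,1]^k × [0,1]^{d-k} × [-β,β]^{(d-k)(|𝐒|-1)}`. -/
def obsMeasure (k d r0 : ℕ) (β : ℝ) : Measure (Euc k × (SIdx k r0 → Euc (d-k))) :=
  (cubeUniform k).prod (Measure.pi fun s : SIdx k r0 =>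
    if (∀ i, s.1 i = 0) then cubeUniform (d-k) else boxUniform (d-k) β)

/-- `f` interpolates `(x, y^𝐒)`. -/
def InterpH {k d r0 : ℕ} (f : Euc k → Euc (d-k))
    (p : Euc k × (SIdx k r0 → Euc (d-k))) : Prop :=
  ∀ s : SIdx k r0, mderiv (toMulti s) f p.1 = p.2 s

/-- `N_n^{(r₀)}(𝓗) = max_{f ∈ 𝓗} #{i : f interpolates (X_i, Y_i^𝐒)}`. -/
def NHmax (k d r0 : ℕ) (α β : ℝ) {n : ℕ}
    (ω : Fin n → Euc k × (SIdx k r0 → Euc (d-k))) : ℕ :=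
  ⨆ f : Holder k (d-k) α β, Nat.card {i : Fin n // InterpH f.1 (ω i)}

/-- `w = Σ_{s=0}^{r₀} (1 - s/α) C(s+k-1, k-1)`. -/
def wconst (k r0 : ℕ) (α : ℝ) : ℝ :=
  ∑ s ∈ Finset.range (r0+1), (1 - s/α) * (Nat.choose (s+k-1) (k-1))

/-- `ρ(r₀) = k / (k + α (d-k) w)`. -/
def rho (k d r0 : ℕ) (α : ℝ) : ℝ := k / (k + α*((d:ℝ)-k)*wconst k r0 α)

/-- Sup-norm of a function over the unit cube. -/
def funSup {k n : ℕ} (f : Euc k → Euc n) : ℝ := ⨆ x : unitCube k, supNorm (f x.1)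

/-- The discrepancy `Φ` on the Hölder class. -/
def Phi {k n : ℕ} (r0 : ℕ) (α : ℝ) (f g : Euc k → Euc n) : ℝ :=
  ⨆ s : SIdx k r0, funSup (fun x => mderiv (toMulti s) f x - mderiv (toMulti s) g x) ^
    (α / (α - ∑ i, (toMulti s i : ℝ)))

/-- The discrepancy `Φ` on the values `y^𝐒`. -/
def PhiPt {k n r0 : ℕ} (α : ℝ) (y1 y2 : SIdx k r0 → Euc n) : ℝ :=
  ⨆ s : SIdx k r0, supNorm (y1 s - y2 s) ^ (α / (α - ∑ i, (toMulti s i : ℝ)))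

/-- Concatenation `ℝ^k × ℝ^{d-k} → ℝ^d`, identifying `ℝ^d` with `ℝ^k × ℝ^{d-k}`. -/
def pairFun {k d : ℕ} (h : k ≤ d) (x : Euc k) (y : Euc (d-k)) : Euc d :=
  WithLp.toLp 2 (fun j => Fin.append x y (Fin.cast (Nat.add_sub_cancel' h).symm j))

/-- `ε = ε(n)`, the solution of `ε^{-k/α} = ε^{(d-k)w} n`. -/
def epsN (k d r0 : ℕ) (α : ℝ) (n : ℕ) : ℝ :=
  (n:ℝ) ^ (-(α / (k + α*((d:ℝ)-k)*wconst k r0 α)))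

/-- The cell `I_m` of sidelength `ε'` indexed by `m`. -/
def cellI {k : ℕ} (ε' : ℝ) (m : Fin k → ℕ) : Set (Euc k) :=
  {x | ∀ i, x i ∈ Set.Ico ((m i : ℝ) * ε') (((m i : ℝ) + 1) * ε')}

open Classical in
/-- The box `R_m = I_m × [ε/2,ε]^{d-k} × Π_{𝐬 ≠ 0} [0,ε_𝐬]^{d-k}`. -/
def Rset (k d r0 : ℕ) (α : ℝ) (ε ε' : ℝ) (m : Fin k → ℕ) :
    Set (Euc k × (SIdx k r0 → Euc (d-k))) :=
  {p | p.1 ∈ cellI ε' m ∧ ∀ s : SIdx k r0, ∀ j,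
    if (∀ i, s.1 i = 0) then p.2 s j ∈ Set.Icc (ε/2) ε
    else p.2 s j ∈ Set.Icc 0 (ε ^ (1 - (∑ i, (toMulti s i : ℝ))/α))}

/-! Write `w = ∑ aᵢ uᵢ`. Angular separation puts `uᵢ` at distance at least `sin c₃ ‖uᵢ‖` from
the span of the other `uⱼ` (for `c₃ ≤ π/2`), which bounds every coefficient:
`|aᵢ| sin c₃ ‖uᵢ‖ ≤ ‖w‖`. Hence `w' = ∑ aᵢ vᵢ` lies in the span of the `vᵢ` with
`‖w - w'‖ ≤ k √d (max ‖vᵢ - uᵢ‖_∞) ‖w‖ / (c₁ sin c₃)`, and the angle between `w` and `w'` is at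
most `π ‖w - w'‖ / ‖w‖` by Jordan's inequality. -/

open Real InnerProductGeometry

section SupNorm

variable {n : ℕ}

lemma supNorm_nonneg (x : Euc n) : 0 ≤ supNorm x :=
  Real.iSup_nonneg fun _ => abs_nonneg _

lemma supNorm_le_norm (x : Euc n) : supNorm x ≤ ‖x‖ :=
  Real.iSup_le (fun i => PiLp.norm_apply_le x i) (norm_nonneg x)

lemma norm_le_sqrt_mul_supNorm (x : Euc n) : ‖x‖ ≤ √n * supNorm x := by
  simpa only [EuclideanSpace.basisFun_inner, Real.norm_eq_abs, Fintype.card_fin, supNorm] using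
    (EuclideanSpace.basisFun (Fin n) ℝ).norm_le_card_mul_iSup_norm_inner x

lemma supNorm_sub_comm (x y : Euc n) : supNorm (x - y) = supNorm (y - x) := by
  simp only [supNorm, ← abs_sub_comm (x _), PiLp.sub_apply]

end SupNorm

section Angle

variable {V : Type*} [NormedAddCommGroup V] [InnerProductSpace ℝ V]

lemma sin_angle_mul_norm_le_norm_sub (x y : V) : sin (angle x y) * ‖x‖ ≤ ‖x - y‖ := by
  have hcos := norm_sub_sq_eq_norm_sq_add_norm_sq_sub_two_mul_norm_mul_norm_mul_cos_angle x y
  have hsq : (sin (angle x y) * ‖x‖) ^ 2 ≤ ‖x - y‖ ^ 2 := by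
    nlinarith [sin_sq_add_cos_sq (angle x y), sq_nonneg (‖y‖ - ‖x‖ * cos (angle x y))]
  exact abs_le_of_sq_le_sq' hsq (norm_nonneg _) |>.2

lemma angle_le_pi_mul_norm_sub_div_norm {x : V} (hx : x ≠ 0) (y : V) :
    angle x y ≤ π * (‖x - y‖ / ‖x‖) := by
  have hx' : 0 < ‖x‖ := norm_pos_iff.2 hx
  rcases le_or_gt ‖x‖ ‖x - y‖ with hfar | hnear
  · calc angle x y ≤ π * 1 := by rw [mul_one]; exact angle_le_pi x y
      _ ≤ π * (‖x - y‖ / ‖x‖) := by gcongr; rwa [one_le_div hx']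
  -- `y` is then within a right angle of `x`, where Jordan's inequality `2θ/π ≤ sin θ` applies.
  have hinner : 0 ≤ ⟪x, y⟫ := by
    have := norm_sub_sq_real x y
    nlinarith [norm_nonneg y, norm_nonneg (x - y)]
  have hright : angle x y ≤ π / 2 :=
    Real.arccos_le_pi_div_two.2 (div_nonneg hinner (by positivity))
  have hjordan := Real.mul_le_sin (angle_nonneg x y) hright
  have hsin : sin (angle x y) ≤ ‖x - y‖ / ‖x‖ :=
    (le_div_iff₀ hx').2 (sin_angle_mul_norm_le_norm_sub x y)
  have hπ := pi_pos
  calc angle x y = π / 2 * (2 / π * angle x y) := by field_simp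
    _ ≤ π / 2 * (‖x - y‖ / ‖x‖) := by gcongr; exact hjordan.trans hsin
    _ ≤ π * (‖x - y‖ / ‖x‖) := by gcongr; linarith

lemma sin_mul_norm_le_norm_sub_of_le_angle {θ : ℝ} (hθ₀ : 0 ≤ θ) (hθ : θ ≤ π / 2) {x : V}
    {P : Submodule ℝ V} (h : ∀ q ∈ P, q ≠ 0 → θ ≤ angle x q) {p : V} (hp : p ∈ P) :
    sin θ * ‖x‖ ≤ ‖x - p‖ := by
  rcases eq_or_ne p 0 with rfl | hp0
  · rw [sub_zero]
    exact mul_le_of_le_one_left (norm_nonneg x) (sin_le_one θ)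
  refine le_trans ?_ (sin_angle_mul_norm_le_norm_sub x p)
  gcongr
  -- `θ ≤ angle x p ≤ π - θ`, the upper bound coming from `-p ∈ P`.
  have hlow := h p hp hp0
  have hhigh := h (-p) (P.neg_mem hp) (neg_ne_zero.2 hp0)
  rw [angle_neg_right] at hhigh
  rcases le_or_gt (angle x p) (π / 2) with hle | hgt
  · exact sin_le_sin_of_le_of_le_pi_div_two (by linarith) hle hlow
  · rw [← sin_pi_sub (angle x p)]
    exact sin_le_sin_of_le_of_le_pi_div_two (by linarith) (by linarith) hhigh

lemma abs_mul_le_norm_sum_smul {ι : Type*} [Fintype ι] [DecidableEq ι] {u : ι → V} {r : ℝ}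
    {i : ι} (h : ∀ p ∈ Submodule.span ℝ (u '' {j | j ≠ i}), r ≤ ‖u i - p‖) (a : ι → ℝ) :
    |a i| * r ≤ ‖∑ j, a j • u j‖ := by
  rcases eq_or_ne (a i) 0 with hai | hai
  · simp [hai]
  set q := ∑ j ∈ Finset.univ.erase i, a j • u j
  have hq : q ∈ Submodule.span ℝ (u '' {j | j ≠ i}) :=
    Submodule.sum_mem _ fun j hj => Submodule.smul_mem _ _
      (Submodule.subset_span ⟨j, Finset.ne_of_mem_erase hj, rfl⟩)
  have hsum : ∑ j, a j • u j = a i • (u i - -((a i)⁻¹ • q)) := by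
    rw [sub_neg_eq_add, smul_add, smul_smul, mul_inv_cancel₀ hai, one_smul]
    exact (Finset.add_sum_erase _ _ (Finset.mem_univ i)).symm
  rw [hsum, norm_smul, Real.norm_eq_abs]
  gcongr
  exact h _ (Submodule.neg_mem _ (Submodule.smul_mem _ _ hq))

lemma norm_sum_smul_sub_sum_smul_le {ι : Type*} [Fintype ι] [DecidableEq ι] {u v : ι → V}
    {r ε : ℝ} (hr : 0 < r)
    (hsep : ∀ i, ∀ p ∈ Submodule.span ℝ (u '' {j | j ≠ i}), r ≤ ‖u i - p‖)
    (hclose : ∀ i, ‖u i - v i‖ ≤ ε) (a : ι → ℝ) :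
    ‖∑ i, a i • u i - ∑ i, a i • v i‖ ≤ Fintype.card ι * (ε / r) * ‖∑ i, a i • u i‖ := by
  set w := ∑ i, a i • u i
  have hterm : ∀ i, ‖a i • (u i - v i)‖ ≤ ‖w‖ / r * ε := fun i => by
    rw [norm_smul, Real.norm_eq_abs]
    exact mul_le_mul ((le_div_iff₀ hr).2 (abs_mul_le_norm_sum_smul (hsep i) a)) (hclose i)
      (norm_nonneg _) (by positivity)
  calc ‖w - ∑ i, a i • v i‖ = ‖∑ i, a i • (u i - v i)‖ := by
        simp only [w, smul_sub, Finset.sum_sub_distrib]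
    _ ≤ ∑ i, ‖a i • (u i - v i)‖ := norm_sum_le _ _
    _ ≤ ∑ _i : ι, ‖w‖ / r * ε := Finset.sum_le_sum fun i _ => hterm i
    _ = Fintype.card ι * (ε / r) * ‖w‖ := by
        rw [Finset.sum_const, Finset.card_univ, nsmul_eq_mul]; ring

end Angle

section SubAngle

variable {d : ℕ}

lemma le_angle_of_le_subAngle_span_singleton {θ : ℝ} {x : Euc d} {P : Submodule ℝ (Euc d)}
    (h : θ ≤ subAngle (Submodule.span ℝ {x}) P) {p : Euc d} (hp : p ∈ P) (hp0 : p ≠ 0) :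
    θ ≤ angle x p := by
  refine h.trans (Real.iSup_le ?_ (angle_nonneg x p))
  rintro ⟨y, hy, hy0⟩
  obtain ⟨t, rfl⟩ := Submodule.mem_span_singleton.1 hy
  have ht : t ≠ 0 := by rintro rfl; simp at hy0
  refine ciInf_le_of_le ⟨0, ?_⟩ ⟨t • p, P.smul_mem t hp, smul_ne_zero ht hp0⟩
    (angle_smul_smul ht x p).le
  rintro _ ⟨q, rfl⟩
  exact angle_nonneg _ _

lemma iInf_angle_le_pi_mul_norm_sub_div_norm {x : Euc d} (hx : x ≠ 0) {K : Submodule ℝ (Euc d)}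
    {y : Euc d} (hy : y ∈ K) :
    ⨅ v : {v : Euc d // v ∈ K ∧ v ≠ 0}, angle x v.1 ≤ π * (‖x - y‖ / ‖x‖) := by
  have hbdd : BddBelow (Set.range fun v : {v : Euc d // v ∈ K ∧ v ≠ 0} => angle x v.1) :=
    ⟨0, by rintro _ ⟨v, rfl⟩; exact angle_nonneg _ _⟩
  rcases eq_or_ne y 0 with rfl | hy0
  · rw [sub_zero, div_self (norm_ne_zero_iff.2 hx), mul_one]
    rcases isEmpty_or_nonempty {v : Euc d // v ∈ K ∧ v ≠ 0} with hK | hK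
    · rw [Real.iInf_of_isEmpty]; exact pi_pos.le
    · exact ciInf_le_of_le hbdd hK.some (angle_le_pi _ _)
  · exact ciInf_le_of_le hbdd ⟨y, hy, hy0⟩ (angle_le_pi_mul_norm_sub_div_norm hx y)

lemma subAngle_le_pi_mul {H K : Submodule ℝ (Euc d)} {ε : ℝ} (hε : 0 ≤ ε)
    (h : ∀ w ∈ H, ∃ w' ∈ K, ‖w - w'‖ ≤ ε * ‖w‖) : subAngle H K ≤ π * ε := by
  refine Real.iSup_le (fun ⟨w, hw, hw0⟩ => ?_) (by positivity)
  obtain ⟨w', hw', hclose⟩ := h w hw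
  refine (iInf_angle_le_pi_mul_norm_sub_div_norm hw0 hw').trans ?_
  gcongr
  exact (div_le_iff₀ (norm_pos_iff.2 hw0)).2 hclose

lemma sin_mul_le_norm_sub_of_separated {k : ℕ} {c c3 : ℝ} (hc3 : 0 ≤ c3) {u : Fin k → Euc d}
    (hu : ∀ i, c ≤ ‖u i‖)
    (hsep : 2 ≤ k → ∀ i, c3 ≤ subAngle (Submodule.span ℝ {u i})
      (Submodule.span ℝ (u '' {j | j ≠ i})))
    (i : Fin k) (p : Euc d) (hp : p ∈ Submodule.span ℝ (u '' {j | j ≠ i})) :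
    sin (min c3 (π / 2)) * c ≤ ‖u i - p‖ := by
  have hθ : 0 ≤ min c3 (π / 2) := le_min hc3 (by positivity)
  have hangle : ∀ q ∈ Submodule.span ℝ (u '' {j | j ≠ i}), q ≠ 0 →
      min c3 (π / 2) ≤ angle (u i) q := by
    intro q hq hq0
    rcases lt_or_ge k 2 with hk2 | hk2
    · have hnone : {j | j ≠ i} = ∅ :=
        Set.eq_empty_iff_forall_notMem.2 fun j hj => hj (Fin.ext (by omega))
      rw [hnone, Set.image_empty, Submodule.span_empty, Submodule.mem_bot] at hq
      exact absurd hq hq0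
    · exact (min_le_left _ _).trans (le_angle_of_le_subAngle_span_singleton (hsep hk2 i) hq hq0)
  calc sin (min c3 (π / 2)) * c ≤ sin (min c3 (π / 2)) * ‖u i‖ := by
        gcongr
        · exact sin_nonneg_of_nonneg_of_le_pi hθ ((min_le_right _ _).trans (by linarith [pi_pos]))
        · exact hu i
    _ ≤ ‖u i - p‖ := sin_mul_norm_le_norm_sub_of_le_angle hθ (min_le_right _ _) hangle hp

end SubAngle

theorem ang_spc_general (k d : ℕ) (hk : 1 ≤ k) (hkd : k ≤ d) (c1 c2 c3 : ℝ)
    (h1 : 0 < c1) (h3 : 0 < c3) :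
    ∃ c : ℝ, 0 < c ∧ ∀ u v : Fin k → Euc d,
      (∀ i, c1 ≤ supNorm (u i) ∧ supNorm (u i) ≤ c2) →
      (∀ i, c1 ≤ supNorm (v i) ∧ supNorm (v i) ≤ c2) →
      (2 ≤ k → ∀ i, c3 ≤ subAngle (Submodule.span ℝ {u i})
        (Submodule.span ℝ (u '' {j | j ≠ i}))) →
      (2 ≤ k → ∀ i, c3 ≤ subAngle (Submodule.span ℝ {v i})
        (Submodule.span ℝ (v '' {j | j ≠ i}))) →
      subAngle (Submodule.span ℝ (Set.range u)) (Submodule.span ℝ (Set.range v)) ≤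
        c * ⨆ i, supNorm (v i - u i) := by
  set θ := min c3 (π / 2)
  have hθ : 0 < θ := lt_min h3 (by positivity)
  have hsinθ : 0 < sin θ := sin_pos_of_pos_of_lt_pi hθ (by linarith [min_le_right c3 (π / 2)])
  have hk' : (0 : ℝ) < k := by exact_mod_cast hk
  have hd : (0 : ℝ) < d := by exact_mod_cast hk.trans hkd
  refine ⟨π * (k * √d / (sin θ * c1)), by positivity, fun u v hu _ hau _ => ?_⟩
  set δ := ⨆ i, supNorm (v i - u i)
  have hδ : 0 ≤ δ := Real.iSup_nonneg fun i => supNorm_nonneg (v i - u i)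
  have hsep := sin_mul_le_norm_sub_of_separated h3.le
    (fun i => (hu i).1.trans (supNorm_le_norm (u i))) hau
  have hclose : ∀ i, ‖u i - v i‖ ≤ √d * δ := fun i => calc
    ‖u i - v i‖ ≤ √d * supNorm (v i - u i) := by
        rw [← supNorm_sub_comm]; exact norm_le_sqrt_mul_supNorm _
    _ ≤ √d * δ := by
        gcongr
        exact le_ciSup (Set.finite_range fun j => supNorm (v j - u j)).bddAbove i
  have hspan := subAngle_le_pi_mul (H := Submodule.span ℝ (Set.range u))
    (K := Submodule.span ℝ (Set.range v)) (ε := k * (√d * δ / (sin θ * c1))) (by positivity)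
    fun w hw => by
      obtain ⟨a, rfl⟩ := (Submodule.mem_span_range_iff_exists_fun ℝ).1 hw
      refine ⟨∑ i, a i • v i, Submodule.sum_mem _ fun i _ =>
        Submodule.smul_mem _ _ (Submodule.subset_span ⟨i, rfl⟩), ?_⟩
      simpa only [Fintype.card_fin] using
        norm_sum_smul_sub_sum_smul_le (by positivity) hsep hclose a
  exact hspan.trans_eq (by ring)

/-- **Lemma 12.** If `u₁,…,u_k; v₁,…,v_k` have sup-norms in `[c₁,c₂]` and (when `k ≥ 2`)
pairwise angular separation at least `c₃`, then the angle between their spans is at most a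
constant times `max_i ‖v_i - u_i‖_∞`. -/
theorem ang_spc (k d : ℕ) (hk : 1 ≤ k) (hkd : k ≤ d) (c1 c2 c3 : ℝ)
    (h1 : 0 < c1) (h2 : 0 < c2) (h3 : 0 < c3) :
    ∃ c : ℝ, 0 < c ∧ ∀ u v : Fin k → Euc d,
      (∀ i, c1 ≤ supNorm (u i) ∧ supNorm (u i) ≤ c2) →
      (∀ i, c1 ≤ supNorm (v i) ∧ supNorm (v i) ≤ c2) →
      (2 ≤ k → ∀ i, c3 ≤ subAngle (Submodule.span ℝ {u i})
        (Submodule.span ℝ (u '' {j | j ≠ i}))) →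
      (2 ≤ k → ∀ i, c3 ≤ subAngle (Submodule.span ℝ {v i})
        (Submodule.span ℝ (v '' {j | j ≠ i}))) →
      subAngle (Submodule.span ℝ (Set.range u)) (Submodule.span ℝ (Set.range v)) ≤
        c * ⨆ i, supNorm (v i - u i) :=
  ang_spc_general k d hk hkd c1 c2 c3 h1 h3

end
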